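/- arXiv:1002.4921 — 8 statements merged into one kernel-verified Lean document; each statement's English description precedes it below -/
import Mathlib

section
/- Let z ∈ ℂ³ be a point at which the (real) Fréchet derivative Df(z) : ℂ³ → ℝ³ of the Harvey–Lawson map is surjective. Then for all u, v, w in the kernel of Df(z) one has ω(u, v) = 0 and Im(Ω(u, v, w)) = 0; that is, the fibers of f are special Lagrangian at their regular points. -/
open Complex

/-- The Harvey–Lawson map `f : ℂ³ → ℝ³`. -/
noncomputable def HarveyLawson (z : Fin 3 → ℂ) : Fin 3 → ℝ :=
  ![(z 0 * z 1 * z 2).im,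
    ‖z 0‖ ^ 2 - ‖z 1‖ ^ 2,
    ‖z 0‖ ^ 2 - ‖z 2‖ ^ 2]

/-- The standard symplectic form on `ℂ³ ≅ ℝ⁶`:
`ω(u,v) = Σⱼ (Re uⱼ · Im vⱼ − Im uⱼ · Re vⱼ)`. -/
def stdSymplectic (u v : Fin 3 → ℂ) : ℝ :=
  ∑ j : Fin 3, ((u j).re * (v j).im - (u j).im * (v j).re)

/-- The standard holomorphic volume form on `ℂ³`:
`Ω(u,v,w)` is the determinant of the complex 3×3 matrix with columns `u, v, w`. -/
def stdHolVol (u v w : Fin 3 → ℂ) : ℂ :=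
  Matrix.det !![u 0, v 0, w 0; u 1, v 1, w 1; u 2, v 2, w 2]

/-!
The components `f₀, f₁, f₂` of the Harvey–Lawson map Poisson-commute, so their Hamiltonian
vector fields `X₀, X₁, X₂` span an `ω`-isotropic subspace, which lies in `ker Df(z)` because
`ω(X_k, ·) = df_k`. A relation `Σ t_k X_k = 0` would give `Σ t_k df_k = 0`, impossible for
`t ≠ 0` when `Df(z)` is onto, so the `X_k` are independent and, by counting dimensions, span
`ker Df(z)`. On that span `Ω(Σ r_k X_k, Σ s_k X_k, Σ t_k X_k) = det(X₀ X₁ X₂) · det(r, s, t)`,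
and `det(X₀ X₁ X₂) = -4 (|z₀z₁|² + |z₀z₂|² + |z₁z₂|²)` is real.
-/

open ComplexConjugate Matrix

lemma LinearMap.range_eq_ker_of_finrank_add_eq {K U V W : Type*} [Field K]
    [AddCommGroup U] [Module K U] [AddCommGroup V] [Module K V] [AddCommGroup W] [Module K W]
    [FiniteDimensional K V]
    {f : U →ₗ[K] V} {g : V →ₗ[K] W} (hf : Function.Injective f) (hg : Function.Surjective g)
    (hfg : LinearMap.range f ≤ LinearMap.ker g)
    (hdim : Module.finrank K U + Module.finrank K W = Module.finrank K V) :
    LinearMap.range f = LinearMap.ker g := by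
  refine Submodule.eq_of_le_of_finrank_le hfg ?_
  have hrank := LinearMap.finrank_range_add_finrank_ker g
  rw [LinearMap.range_eq_top.mpr hg, finrank_top, LinearMap.finrank_range_of_inj hf] at *
  omega

lemma hasFDerivAt_norm_sq_apply {ι : Type*} [Fintype ι] (z : ι → ℂ) (i : ι) :
    HasFDerivAt (fun z : ι → ℂ => ‖z i‖ ^ 2)
      (Complex.reCLM.comp ((2 * conj (z i)) • ContinuousLinearMap.proj (R := ℝ) i)) z := by
  let p : (ι → ℂ) →L[ℝ] ℂ := ContinuousLinearMap.proj i
  refine ((p.hasFDerivAt (x := z)).norm_sq).congr_fderiv ?_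
  ext u
  simp only [p, ContinuousLinearMap.comp_apply, _root_.smul_apply, ContinuousLinearMap.proj_apply,
    coe_innerSL_apply, Complex.inner, reCLM_apply, smul_eq_mul, nsmul_eq_mul, mul_re, mul_im,
    conj_re, conj_im, re_ofNat, im_ofNat]
  ring

lemma hasFDerivAt_im_mul_mul (z : Fin 3 → ℂ) :
    HasFDerivAt (fun z : Fin 3 → ℂ => (z 0 * z 1 * z 2).im)
      (Complex.imCLM.comp ((z 1 * z 2) • ContinuousLinearMap.proj (R := ℝ) 0 +
        (z 0 * z 2) • ContinuousLinearMap.proj (R := ℝ) 1 +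
        (z 0 * z 1) • ContinuousLinearMap.proj (R := ℝ) 2)) z := by
  let p (i : Fin 3) : (Fin 3 → ℂ) →L[ℝ] ℂ := ContinuousLinearMap.proj i
  have hprod := (((p 0).hasFDerivAt (x := z)).mul (p 1).hasFDerivAt).mul (p 2).hasFDerivAt
  refine (Complex.imCLM.hasFDerivAt.comp z hprod).congr_fderiv ?_
  ext u
  simp only [p, ContinuousLinearMap.comp_apply, ContinuousLinearMap.comp_add, smul_add,
    _root_.add_apply, _root_.smul_apply, ContinuousLinearMap.proj_apply, Pi.mul_apply, smul_eq_mul,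
    imCLM_apply, mul_im, mul_re]
  ring

noncomputable def harveyLawsonFDeriv (z : Fin 3 → ℂ) : (Fin 3 → ℂ) →L[ℝ] (Fin 3 → ℝ) :=
  let p (i : Fin 3) : (Fin 3 → ℂ) →L[ℝ] ℂ := ContinuousLinearMap.proj i
  ContinuousLinearMap.pi
    ![Complex.imCLM.comp ((z 1 * z 2) • p 0 + (z 0 * z 2) • p 1 + (z 0 * z 1) • p 2),
      Complex.reCLM.comp ((2 * conj (z 0)) • p 0) - Complex.reCLM.comp ((2 * conj (z 1)) • p 1),
      Complex.reCLM.comp ((2 * conj (z 0)) • p 0) - Complex.reCLM.comp ((2 * conj (z 2)) • p 2)]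

lemma hasFDerivAt_harveyLawson (z : Fin 3 → ℂ) :
    HasFDerivAt HarveyLawson (harveyLawsonFDeriv z) z := by
  refine hasFDerivAt_pi.2 fun i => ?_
  match i with
  | 0 => exact hasFDerivAt_im_mul_mul z
  | 1 => exact (hasFDerivAt_norm_sq_apply z 0).sub (hasFDerivAt_norm_sq_apply z 1)
  | 2 => exact (hasFDerivAt_norm_sq_apply z 0).sub (hasFDerivAt_norm_sq_apply z 2)

lemma harveyLawsonFDeriv_apply (z u : Fin 3 → ℂ) :
    harveyLawsonFDeriv z u = ![(z 1 * z 2 * u 0 + z 0 * z 2 * u 1 + z 0 * z 1 * u 2).im,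
      (2 * conj (z 0) * u 0 - 2 * conj (z 1) * u 1).re,
      (2 * conj (z 0) * u 0 - 2 * conj (z 2) * u 2).re] := by
  ext i
  fin_cases i <;> simp [harveyLawsonFDeriv]

lemma fderiv_harveyLawson (z : Fin 3 → ℂ) : fderiv ℝ HarveyLawson z = harveyLawsonFDeriv z :=
  (hasFDerivAt_harveyLawson z).fderiv

/-- Column `k` is the Hamiltonian vector field `X` of the `k`-th component `f k` of the
Harvey–Lawson map, characterised by `ω(X, ·) = d(f k)`. -/
def hamiltonianMatrix (z : Fin 3 → ℂ) : Matrix (Fin 3) (Fin 3) ℂ :=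
  !![conj (z 1 * z 2), -2 * I * z 0, -2 * I * z 0;
     conj (z 0 * z 2), 2 * I * z 1, 0;
     conj (z 0 * z 1), 0, 2 * I * z 2]

noncomputable def hamiltonianMap (z : Fin 3 → ℂ) : (Fin 3 → ℝ) →ₗ[ℝ] (Fin 3 → ℂ) :=
  ((hamiltonianMatrix z).mulVecLin.restrictScalars ℝ).comp
    (LinearMap.compLeft Complex.ofRealCLM.toLinearMap (Fin 3))

lemma hamiltonianMap_apply (z : Fin 3 → ℂ) (t : Fin 3 → ℝ) :
    hamiltonianMap z t = hamiltonianMatrix z *ᵥ fun i => (t i : ℂ) := rfl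

lemma dotProduct_harveyLawsonFDeriv (z u : Fin 3 → ℂ) (t : Fin 3 → ℝ) :
    t ⬝ᵥ harveyLawsonFDeriv z u = stdSymplectic (hamiltonianMap z t) u := by
  simp only [harveyLawsonFDeriv_apply, hamiltonianMap_apply, hamiltonianMatrix, stdSymplectic,
    dotProduct, mulVec, Fin.sum_univ_three, of_apply, cons_val, add_re, add_im, sub_re, mul_re,
    mul_im, neg_re, neg_im, conj_re, conj_im, ofReal_re, ofReal_im, I_re, I_im, re_ofNat, im_ofNat,
    zero_re, zero_im]
  ring

lemma stdSymplectic_hamiltonianMap (z : Fin 3 → ℂ) (s t : Fin 3 → ℝ) :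
    stdSymplectic (hamiltonianMap z s) (hamiltonianMap z t) = 0 := by
  simp only [hamiltonianMap_apply, hamiltonianMatrix, stdSymplectic, dotProduct, mulVec,
    Fin.sum_univ_three, of_apply, cons_val, add_re, add_im, mul_re, mul_im, neg_re, neg_im,
    conj_re, conj_im, ofReal_re, ofReal_im, I_re, I_im, re_ofNat, im_ofNat, zero_re, zero_im]
  ring

lemma hamiltonianMap_mem_ker (z : Fin 3 → ℂ) (t : Fin 3 → ℝ) :
    hamiltonianMap z t ∈ LinearMap.ker (harveyLawsonFDeriv z : (Fin 3 → ℂ) →ₗ[ℝ] Fin 3 → ℝ) := by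
  ext k
  have h := dotProduct_harveyLawsonFDeriv z (hamiltonianMap z t) (Pi.single k 1)
  rwa [single_one_dotProduct, stdSymplectic_hamiltonianMap] at h

lemma hamiltonianMap_injective (z : Fin 3 → ℂ)
    (hz : Function.Surjective (harveyLawsonFDeriv z)) : Function.Injective (hamiltonianMap z) := by
  refine (injective_iff_map_eq_zero _).2 fun t ht => ?_
  obtain ⟨u, hu⟩ := hz t
  have h := dotProduct_harveyLawsonFDeriv z u t
  rw [hu, ht] at h
  exact dotProduct_self_eq_zero.1 (by simpa [stdSymplectic] using h)

lemma range_hamiltonianMap (z : Fin 3 → ℂ) (hz : Function.Surjective (harveyLawsonFDeriv z)) :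
    LinearMap.range (hamiltonianMap z) =
      LinearMap.ker (harveyLawsonFDeriv z : (Fin 3 → ℂ) →ₗ[ℝ] Fin 3 → ℝ) := by
  refine LinearMap.range_eq_ker_of_finrank_add_eq (hamiltonianMap_injective z hz) hz
    (LinearMap.range_le_iff_comap.2 ?_) ?_
  · exact eq_top_iff.2 fun t _ => hamiltonianMap_mem_ker z t
  · simp [Module.finrank_pi_fintype]

lemma stdHolVol_mulVec (M : Matrix (Fin 3) (Fin 3) ℂ) (a b c : Fin 3 → ℂ) :
    stdHolVol (M *ᵥ a) (M *ᵥ b) (M *ᵥ c) = M.det * stdHolVol a b c := by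
  rw [stdHolVol, stdHolVol, ← det_mul]
  congr 1
  ext i j
  fin_cases i <;> fin_cases j <;> simp [mulVec, dotProduct, Matrix.mul_apply, Fin.sum_univ_three]

lemma im_stdHolVol_ofReal (a b c : Fin 3 → ℝ) :
    (stdHolVol (fun i => (a i : ℂ)) (fun i => (b i : ℂ)) (fun i => (c i : ℂ))).im = 0 := by
  simp [stdHolVol, det_fin_three]

lemma det_hamiltonianMatrix (z : Fin 3 → ℂ) :
    (hamiltonianMatrix z).det =
      ((-4 * (normSq (z 0 * z 1) + normSq (z 0 * z 2) + normSq (z 1 * z 2)) : ℝ) : ℂ) := by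
  simp only [hamiltonianMatrix, det_fin_three, of_apply, cons_val, map_mul, normSq_eq_conj_mul_self,
    ofReal_mul, ofReal_add, ofReal_neg, ofReal_ofNat]
  linear_combination 4 * (z 0 * conj (z 0) * z 1 * conj (z 1) + z 0 * conj (z 0) * z 2 * conj (z 2)
    + z 1 * conj (z 1) * z 2 * conj (z 2)) * I_sq

lemma im_stdHolVol_hamiltonianMap (z : Fin 3 → ℂ) (r s t : Fin 3 → ℝ) :
    (stdHolVol (hamiltonianMap z r) (hamiltonianMap z s) (hamiltonianMap z t)).im = 0 := by
  simp only [hamiltonianMap_apply, stdHolVol_mulVec, det_hamiltonianMatrix, mul_im, ofReal_re,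
    ofReal_im, im_stdHolVol_ofReal, mul_zero, zero_mul, add_zero]

/-- At every regular point `z` of the Harvey–Lawson map (i.e. a point where the real
Fréchet derivative `Df(z) : ℂ³ → ℝ³` is surjective), the tangent space of the fiber,
namely `ker Df(z)`, is special Lagrangian: `ω` vanishes on it and `Im Ω` vanishes on it. -/
theorem harveyLawson_fibers_special_lagrangian
    (z : Fin 3 → ℂ) (hz : Function.Surjective (fderiv ℝ HarveyLawson z)) :
    ∀ u v w : Fin 3 → ℂ,
      u ∈ LinearMap.ker ((fderiv ℝ HarveyLawson z : (Fin 3 → ℂ) →ₗ[ℝ] Fin 3 → ℝ)) →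
      v ∈ LinearMap.ker ((fderiv ℝ HarveyLawson z : (Fin 3 → ℂ) →ₗ[ℝ] Fin 3 → ℝ)) →
      w ∈ LinearMap.ker ((fderiv ℝ HarveyLawson z : (Fin 3 → ℂ) →ₗ[ℝ] Fin 3 → ℝ)) →
      stdSymplectic u v = 0 ∧ (stdHolVol u v w).im = 0 := by
  rw [fderiv_harveyLawson] at hz ⊢
  rw [← range_hamiltonianMap z hz]
  rintro _ _ _ ⟨r, rfl⟩ ⟨s, rfl⟩ ⟨t, rfl⟩
  exact ⟨stdSymplectic_hamiltonianMap z r s, im_stdHolVol_hamiltonianMap z r s t⟩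
end

section
/- The image under the Harvey–Lawson map f of the union of the three coordinate axes (ℂ × {0} × {0}) ∪ ({0} × ℂ × {0}) ∪ ({0} × {0} × ℂ) equals the union of three rays in the plane {x₁ = 0} ⊂ ℝ³, namely {(0, t, t) : t ≥ 0} ∪ {(0, t, 0) : t ≤ 0} ∪ {(0, 0, t) : t ≤ 0}; in other words, the discriminant locus of the Harvey–Lawson fibration consists of these three rays. -/
open Complex

/-! On each coordinate axis the product `z₀z₁z₂` vanishes and only one of the squared norms
survives, so each axis is mapped onto a ray; every ray is attained because every
`t ≥ 0` is a squared norm. -/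

theorem exists_norm_sq_eq (E : Type*) [SeminormedAddCommGroup E] [NormedSpace ℝ E]
    [NontrivialTopology E] {t : ℝ} (ht : 0 ≤ t) : ∃ x : E, ‖x‖ ^ 2 = t := by
  obtain ⟨x, hx⟩ := exists_norm_eq E (Real.sqrt_nonneg t)
  exact ⟨x, by rw [hx, Real.sq_sqrt ht]⟩

theorem exists_neg_norm_sq_eq (E : Type*) [SeminormedAddCommGroup E] [NormedSpace ℝ E]
    [NontrivialTopology E] {t : ℝ} (ht : t ≤ 0) : ∃ x : E, -‖x‖ ^ 2 = t := by
  obtain ⟨x, hx⟩ := exists_norm_sq_eq E (neg_nonneg.mpr ht)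
  exact ⟨x, by rw [hx, neg_neg]⟩

theorem harveyLawson_of_axis_zero {z : Fin 3 → ℂ} (h1 : z 1 = 0) (h2 : z 2 = 0) :
    HarveyLawson z = ![0, ‖z 0‖ ^ 2, ‖z 0‖ ^ 2] := by
  simp [HarveyLawson, h1, h2]

theorem harveyLawson_of_axis_one {z : Fin 3 → ℂ} (h0 : z 0 = 0) (h2 : z 2 = 0) :
    HarveyLawson z = ![0, -‖z 1‖ ^ 2, 0] := by
  simp [HarveyLawson, h0, h2]

theorem harveyLawson_of_axis_two {z : Fin 3 → ℂ} (h0 : z 0 = 0) (h1 : z 1 = 0) :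
    HarveyLawson z = ![0, 0, -‖z 2‖ ^ 2] := by
  simp [HarveyLawson, h0, h1]

theorem image_harveyLawson_axis_zero :
    HarveyLawson '' {z | z 1 = 0 ∧ z 2 = 0} = {x | ∃ t : ℝ, 0 ≤ t ∧ x = ![0, t, t]} := by
  ext x
  constructor
  · rintro ⟨z, ⟨h1, h2⟩, rfl⟩
    exact ⟨_, by positivity, harveyLawson_of_axis_zero h1 h2⟩
  · rintro ⟨t, ht, rfl⟩
    obtain ⟨a, rfl⟩ := exists_norm_sq_eq ℂ ht
    exact ⟨![a, 0, 0], ⟨rfl, rfl⟩, harveyLawson_of_axis_zero rfl rfl⟩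

theorem image_harveyLawson_axis_one :
    HarveyLawson '' {z | z 0 = 0 ∧ z 2 = 0} = {x | ∃ t : ℝ, t ≤ 0 ∧ x = ![0, t, 0]} := by
  ext x
  constructor
  · rintro ⟨z, ⟨h0, h2⟩, rfl⟩
    exact ⟨_, neg_nonpos.mpr (by positivity), harveyLawson_of_axis_one h0 h2⟩
  · rintro ⟨t, ht, rfl⟩
    obtain ⟨a, rfl⟩ := exists_neg_norm_sq_eq ℂ ht
    exact ⟨![0, a, 0], ⟨rfl, rfl⟩, harveyLawson_of_axis_one rfl rfl⟩

theorem image_harveyLawson_axis_two :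
    HarveyLawson '' {z | z 0 = 0 ∧ z 1 = 0} = {x | ∃ t : ℝ, t ≤ 0 ∧ x = ![0, 0, t]} := by
  ext x
  constructor
  · rintro ⟨z, ⟨h0, h1⟩, rfl⟩
    exact ⟨_, neg_nonpos.mpr (by positivity), harveyLawson_of_axis_two h0 h1⟩
  · rintro ⟨t, ht, rfl⟩
    obtain ⟨a, rfl⟩ := exists_neg_norm_sq_eq ℂ ht
    exact ⟨![0, 0, a], ⟨rfl, rfl⟩, harveyLawson_of_axis_two rfl rfl⟩

/-- The image under the Harvey–Lawson map of the union of the three coordinate axes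
equals the union of the three rays `{(0,t,t) : t ≥ 0} ∪ {(0,t,0) : t ≤ 0} ∪
{(0,0,t) : t ≤ 0}` in the plane `{x₁ = 0} ⊂ ℝ³`: the discriminant locus of the
Harvey–Lawson fibration. -/
theorem harveyLawson_discriminant_locus :
    HarveyLawson ''
        ({z : Fin 3 → ℂ | z 1 = 0 ∧ z 2 = 0} ∪
         {z : Fin 3 → ℂ | z 0 = 0 ∧ z 2 = 0} ∪
         {z : Fin 3 → ℂ | z 0 = 0 ∧ z 1 = 0}) =
      {x : Fin 3 → ℝ | ∃ t : ℝ, 0 ≤ t ∧ x = ![0, t, t]} ∪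
      {x : Fin 3 → ℝ | ∃ t : ℝ, t ≤ 0 ∧ x = ![0, t, 0]} ∪
      {x : Fin 3 → ℝ | ∃ t : ℝ, t ≤ 0 ∧ x = ![0, 0, t]} := by
  rw [Set.image_union, Set.image_union, image_harveyLawson_axis_zero,
    image_harveyLawson_axis_one, image_harveyLawson_axis_two]
end

section
/- For every point p ∈ ℝ³ not lying in the union of the three rays {(0, t, t) : t ≥ 0} ∪ {(0, t, 0) : t ≤ 0} ∪ {(0, 0, t) : t ≤ 0}, the fiber f⁻¹({p}) of the Harvey–Lawson map is homeomorphic to S¹ × S¹ × ℝ (the product of a 2-torus with a line), where S¹ denotes the unit circle in ℂ. -/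
/-!
On the fibre over `p`, put `s = |z₀|²`. Then `|z₁|² = s - p₁`, `|z₂|² = s - p₂` and
`|z₀ z₁ z₂|² = s (s - p₁) (s - p₂)`, a cubic in `s` that increases strictly from `0` to `∞` on
`s ≥ max (0, p₁, p₂)`. As `Im (z₀ z₁ z₂) = p₀` is fixed, `t = Re (z₀ z₁ z₂)` determines `s`
continuously through `s (s - p₁) (s - p₂) = t² + p₀²`, and `z₂` is then determined by `z₀`, `z₁`
and `t`. So `z ↦ (z₀ / |z₀|, z₁ / |z₁|, t)` is a homeomorphism onto `S¹ × S¹ × ℝ` as soon as `z₀`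
and `z₁` never vanish on the fibre, which happens when `p₀ ≠ 0` or when `p₂` is the strict maximum
of `0, p₁, p₂`. Off the discriminant one of `0, p₁, p₂` is the strict maximum or `p₀ ≠ 0`, and a
permutation of the coordinates of `ℂ³` reduces every case to this one.
-/

open Complex

/-- The discriminant locus of the Harvey–Lawson fibration: three rays in the plane
`{x₁ = 0} ⊂ ℝ³`. -/
def HLDiscriminant : Set (Fin 3 → ℝ) :=
  {x : Fin 3 → ℝ | ∃ t : ℝ, 0 ≤ t ∧ x = ![0, t, t]} ∪
  {x : Fin 3 → ℝ | ∃ t : ℝ, t ≤ 0 ∧ x = ![0, t, 0]} ∪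
  {x : Fin 3 → ℝ | ∃ t : ℝ, t ≤ 0 ∧ x = ![0, 0, t]}

open Set Filter Metric

theorem StrictMonoOn.exists_continuous_inverse_Ici {f : ℝ → ℝ} {a : ℝ}
    (hmono : StrictMonoOn f (Ici a)) (hcont : ContinuousOn f (Ici a))
    (htop : Tendsto f atTop atTop) :
    ∃ g : ℝ → ℝ, Continuous g ∧ ∀ y, f a ≤ y → a ≤ g y ∧ f (g y) = y := by
  -- extend `f` to a strictly monotone surjection of `ℝ`, affine to the left of `a`
  set F : ℝ → ℝ := fun s ↦ f (max s a) + min (s - a) 0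
  have hF_right {s} (hs : a ≤ s) : F s = f s := by simp [F, hs]
  have hF_mono : StrictMono F := by
    intro s s' hss'
    rcases lt_or_ge s a with hs | hs
    · have hf : f (max s a) ≤ f (max s' a) := by
        rw [max_eq_right hs.le]
        exact hmono.monotoneOn self_mem_Ici (le_max_right _ _ : a ≤ max s' a) (le_max_right _ _)
      have hmin : min (s - a) 0 < min (s' - a) 0 := by
        rw [min_eq_left (by linarith)]
        exact lt_min (by linarith) (by linarith)
      exact add_lt_add_of_le_of_lt hf hmin
    · rw [hF_right hs, hF_right (hs.trans hss'.le)]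
      exact hmono hs (hs.trans hss'.le) hss'
  have hF_cont : Continuous F :=
    (hcont.comp_continuous (continuous_id.max continuous_const) fun s ↦ le_max_right s a).add
      ((continuous_id.sub continuous_const).min continuous_const)
  have hF_top : Tendsto F atTop atTop :=
    htop.congr' <| (eventually_ge_atTop a).mono fun s hs ↦ (hF_right hs).symm
  have hF_bot : Tendsto F atBot atBot := by
    refine (tendsto_atBot_add_const_right _ (f a - a) tendsto_id).congr' ?_
    filter_upwards [eventually_le_atBot a] with s hs
    simp only [F, max_eq_right hs, min_eq_left (sub_nonpos.2 hs), id]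
    ring
  let e := hF_mono.orderIsoOfSurjective F (hF_cont.surjective hF_top hF_bot)
  refine ⟨e.symm, e.symm.continuous, fun y hy ↦ ?_⟩
  have hFe : F (e.symm y) = y := e.apply_symm_apply y
  have ha : a ≤ e.symm y := hF_mono.le_iff_le.1 (by rw [hFe, hF_right le_rfl]; exact hy)
  exact ⟨ha, by rw [← hF_right ha, hFe]⟩

namespace Complex

lemma norm_ofReal_mul {r : ℝ} (hr : 0 ≤ r) {u : ℂ} (hu : ‖u‖ = 1) : ‖(r : ℂ) * u‖ = r := by
  rw [norm_mul, norm_real, Real.norm_of_nonneg hr, hu, mul_one]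

lemma ofReal_mul_div_norm {r : ℝ} (hr : 0 < r) {u : ℂ} (hu : ‖u‖ = 1) :
    (r : ℂ) * u / ‖(r : ℂ) * u‖ = u := by
  rw [norm_ofReal_mul hr.le hu, mul_div_cancel_left₀ _ (ofReal_ne_zero.2 hr.ne')]

lemma div_norm_mem_sphere {z : ℂ} (hz : z ≠ 0) : z / ‖z‖ ∈ sphere (0 : ℂ) 1 := by
  rw [mem_sphere_zero_iff_norm, norm_div, norm_real, norm_norm, div_self (norm_ne_zero_iff.2 hz)]

end Complex

namespace HarveyLawson

section Cubic

variable (β γ : ℝ)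

def cubic (s : ℝ) : ℝ := s * (s - β) * (s - γ)

lemma continuous_cubic : Continuous (cubic β γ) := by
  unfold cubic
  fun_prop

lemma cubic_strictMonoOn : StrictMonoOn (cubic β γ) (Ici (max (max 0 β) γ)) := by
  intro s hs s' hs' hss'
  simp only [mem_Ici, max_le_iff] at hs hs'
  exact mul_lt_mul'' (mul_lt_mul'' hss' (by linarith) hs.1.1 (by linarith)) (by linarith)
    (mul_nonneg hs.1.1 (by linarith)) (by linarith)

lemma cubic_max_eq_zero : cubic β γ (max (max 0 β) γ) = 0 := by
  rcases max_choice (max 0 β) γ with h | h <;> rw [h]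
  · rcases max_choice 0 β with h' | h' <;> simp [cubic, h']
  · simp [cubic]

lemma tendsto_cubic_atTop : Tendsto (cubic β γ) atTop atTop := by
  refine tendsto_atTop_mono' _ ?_ tendsto_id
  filter_upwards [eventually_ge_atTop (max (max 1 (β + 1)) (γ + 1))] with s hs
  simp only [max_le_iff] at hs
  have h1 : 1 ≤ (s - β) * (s - γ) := one_le_mul_of_one_le_of_one_le (by linarith) (by linarith)
  calc s = s * 1 := (mul_one s).symm
    _ ≤ cubic β γ s := by rw [cubic, mul_assoc]; gcongr; linarith

variable {β γ}

lemma pos_of_sq_le_cubic {q s : ℝ} (hq : q ≠ 0 ∨ 0 < γ ∧ β < γ)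
    (hs : max (max 0 β) γ ≤ s) (hc : q ^ 2 ≤ cubic β γ s) : 0 < s ∧ β < s := by
  simp only [max_le_iff] at hs
  rcases hq with hq | ⟨hγ, hβγ⟩
  · have hc₀ : 0 < cubic β γ s := (sq_pos_of_ne_zero hq).trans_le hc
    refine ⟨hs.1.1.lt_of_ne ?_, hs.1.2.lt_of_ne ?_⟩ <;> rintro rfl <;> simp [cubic] at hc₀
  · exact ⟨by linarith, by linarith⟩

end Cubic

section Fiber

variable {p : Fin 3 → ℝ} {z : Fin 3 → ℂ}

lemma mem_fiber_iff : z ∈ HarveyLawson ⁻¹' {p} ↔ (z 0 * z 1 * z 2).im = p 0 ∧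
    ‖z 0‖ ^ 2 - ‖z 1‖ ^ 2 = p 1 ∧ ‖z 0‖ ^ 2 - ‖z 2‖ ^ 2 = p 2 := by
  simp [funext_iff, Fin.forall_fin_succ, HarveyLawson]

lemma cubic_sq_norm_of_mem_fiber (hz : z ∈ HarveyLawson ⁻¹' {p}) :
    cubic (p 1) (p 2) (‖z 0‖ ^ 2) = (z 0 * z 1 * z 2).re ^ 2 + p 0 ^ 2 := by
  obtain ⟨him, h₁, h₂⟩ := mem_fiber_iff.1 hz
  rw [cubic, ← h₁, ← h₂, ← him, sub_sub_cancel, sub_sub_cancel, ← mul_pow, ← mul_pow,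
    ← norm_mul, ← norm_mul, Complex.sq_norm, normSq_apply]
  ring

lemma max_le_sq_norm_of_mem_fiber (hz : z ∈ HarveyLawson ⁻¹' {p}) :
    max (max 0 (p 1)) (p 2) ≤ ‖z 0‖ ^ 2 := by
  obtain ⟨-, h₁, h₂⟩ := mem_fiber_iff.1 hz
  simp only [max_le_iff]
  exact ⟨⟨by positivity, by linarith [sq_nonneg ‖z 1‖]⟩, by linarith [sq_nonneg ‖z 2‖]⟩

end Fiber

section Torus

variable {p : Fin 3 → ℝ} {S : ℝ → ℝ}

/-- `S t` is the root of `cubic (p 1) (p 2) s = t ^ 2 + p 0 ^ 2` on the branch where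
`s`, `s - p 1`, `s - p 2` can be the squared moduli of `z₀`, `z₁`, `z₂`. -/
def SolvesCubic (p : Fin 3 → ℝ) (S : ℝ → ℝ) : Prop :=
  ∀ t, max (max 0 (p 1)) (p 2) ≤ S t ∧ cubic (p 1) (p 2) (S t) = t ^ 2 + p 0 ^ 2

/-- The point of the fibre over `p` with `zᵢ / ‖zᵢ‖ = uᵢ` (`i = 0, 1`) and `Re (z₀ z₁ z₂) = t`. -/
noncomputable def torusParam (p : Fin 3 → ℝ) (S : ℝ → ℝ) (u₀ u₁ : ℂ) (t : ℝ) : Fin 3 → ℂ :=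
  ![√(S t) * u₀, √(S t - p 1) * u₁, (t + p 0 * I) / (√(S t) * u₀ * (√(S t - p 1) * u₁))]

lemma torusParam_denom_ne_zero (hS_pos : ∀ t, 0 < S t ∧ p 1 < S t) {u₀ u₁ : ℂ}
    (hu₀ : u₀ ∈ sphere (0 : ℂ) 1) (hu₁ : u₁ ∈ sphere (0 : ℂ) 1) (t : ℝ) :
    (√(S t) * u₀ * (√(S t - p 1) * u₁) : ℂ) ≠ 0 := by
  have h₀ : √(S t) ≠ 0 := (Real.sqrt_pos.2 (hS_pos t).1).ne'
  have h₁ : √(S t - p 1) ≠ 0 := (Real.sqrt_pos.2 (sub_pos.2 (hS_pos t).2)).ne'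
  exact mul_ne_zero (mul_ne_zero (ofReal_ne_zero.2 h₀) (ne_of_mem_sphere hu₀ one_ne_zero))
    (mul_ne_zero (ofReal_ne_zero.2 h₁) (ne_of_mem_sphere hu₁ one_ne_zero))

lemma torusParam_mul (hS_pos : ∀ t, 0 < S t ∧ p 1 < S t) {u₀ u₁ : ℂ}
    (hu₀ : u₀ ∈ sphere (0 : ℂ) 1) (hu₁ : u₁ ∈ sphere (0 : ℂ) 1) (t : ℝ) :
    torusParam p S u₀ u₁ t 0 * torusParam p S u₀ u₁ t 1 * torusParam p S u₀ u₁ t 2 =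
      t + p 0 * I :=
  mul_div_cancel₀ _ (torusParam_denom_ne_zero hS_pos hu₀ hu₁ t)

lemma continuous_torusParam (hS_cont : Continuous S) (hS_pos : ∀ t, 0 < S t ∧ p 1 < S t) :
    Continuous fun x : sphere (0 : ℂ) 1 × sphere (0 : ℂ) 1 × ℝ ↦
      torusParam p S x.1 x.2.1 x.2.2 := by
  have hden (x : sphere (0 : ℂ) 1 × sphere (0 : ℂ) 1 × ℝ) :=
    torusParam_denom_ne_zero hS_pos x.1.2 x.2.1.2 x.2.2
  unfold torusParam
  fun_prop (disch := exact hden)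

lemma torusParam_mem_fiber (hS : SolvesCubic p S) (hS_pos : ∀ t, 0 < S t ∧ p 1 < S t)
    {u₀ u₁ : ℂ} (hu₀ : u₀ ∈ sphere (0 : ℂ) 1) (hu₁ : u₁ ∈ sphere (0 : ℂ) 1) (t : ℝ) :
    torusParam p S u₀ u₁ t ∈ HarveyLawson ⁻¹' {p} := by
  obtain ⟨h₀, h₁⟩ := hS_pos t
  set z := torusParam p S u₀ u₁ t
  have hz₀ : ‖z 0‖ ^ 2 = S t := by
    rw [show z 0 = √(S t) * u₀ from rfl, norm_ofReal_mul (Real.sqrt_nonneg _)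
      (mem_sphere_zero_iff_norm.1 hu₀), Real.sq_sqrt h₀.le]
  have hz₁ : ‖z 1‖ ^ 2 = S t - p 1 := by
    rw [show z 1 = √(S t - p 1) * u₁ from rfl, norm_ofReal_mul (Real.sqrt_nonneg _)
      (mem_sphere_zero_iff_norm.1 hu₁), Real.sq_sqrt (sub_nonneg.2 h₁.le)]
  have hprod : z 0 * z 1 * z 2 = t + p 0 * I := torusParam_mul hS_pos hu₀ hu₁ t
  have hz₂ : ‖z 2‖ ^ 2 = S t - p 2 := by
    have h : ‖z 0‖ ^ 2 * ‖z 1‖ ^ 2 * ‖z 2‖ ^ 2 = t ^ 2 + p 0 ^ 2 := by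
      rw [← mul_pow, ← mul_pow, ← norm_mul, ← norm_mul, hprod, Complex.sq_norm,
        normSq_add_mul_I]
    rw [hz₀, hz₁, ← (hS t).2, cubic] at h
    exact mul_left_cancel₀ (mul_ne_zero h₀.ne' (sub_ne_zero.2 h₁.ne')) h
  refine mem_fiber_iff.2 ⟨by simp [hprod], ?_, ?_⟩
  · rw [hz₀, hz₁]; ring
  · rw [hz₀, hz₂]; ring

lemma sq_norm_eq_of_mem_fiber (hS : SolvesCubic p S) {z : Fin 3 → ℂ}
    (hz : z ∈ HarveyLawson ⁻¹' {p}) : ‖z 0‖ ^ 2 = S (z 0 * z 1 * z 2).re :=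
  (cubic_strictMonoOn _ _).injOn (max_le_sq_norm_of_mem_fiber hz) (hS _).1 <| by
    rw [cubic_sq_norm_of_mem_fiber hz, (hS _).2]

lemma ne_zero_of_mem_fiber (hS : SolvesCubic p S) (hS_pos : ∀ t, 0 < S t ∧ p 1 < S t)
    {z : Fin 3 → ℂ} (hz : z ∈ HarveyLawson ⁻¹' {p}) : z 0 ≠ 0 ∧ z 1 ≠ 0 := by
  have h₀ := sq_norm_eq_of_mem_fiber hS hz
  have h₁ := (mem_fiber_iff.1 hz).2.1
  obtain ⟨hpos₀, hpos₁⟩ := hS_pos (z 0 * z 1 * z 2).re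
  rw [← h₀] at hpos₀ hpos₁
  refine ⟨fun h ↦ ?_, fun h ↦ ?_⟩
  · rw [h, norm_zero, zero_pow two_ne_zero] at hpos₀
    exact hpos₀.false
  · rw [h, norm_zero, zero_pow two_ne_zero, sub_zero] at h₁
    linarith

lemma torusParam_of_mem_fiber (hS : SolvesCubic p S) (hS_pos : ∀ t, 0 < S t ∧ p 1 < S t)
    {z : Fin 3 → ℂ} (hz : z ∈ HarveyLawson ⁻¹' {p}) :
    torusParam p S (z 0 / ‖z 0‖) (z 1 / ‖z 1‖) (z 0 * z 1 * z 2).re = z := by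
  obtain ⟨hz₀, hz₁⟩ := ne_zero_of_mem_fiber hS hS_pos hz
  obtain ⟨him, h₁, -⟩ := mem_fiber_iff.1 hz
  have hS₀ := sq_norm_eq_of_mem_fiber hS hz
  have hr₀ : √(S (z 0 * z 1 * z 2).re) = ‖z 0‖ := by
    rw [← hS₀, Real.sqrt_sq (norm_nonneg _)]
  have hr₁ : √(S (z 0 * z 1 * z 2).re - p 1) = ‖z 1‖ := by
    rw [← hS₀, ← h₁, sub_sub_cancel, Real.sqrt_sq (norm_nonneg _)]
  have hpolar {w : ℂ} (hw : w ≠ 0) : (‖w‖ : ℂ) * (w / ‖w‖) = w :=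
    mul_div_cancel₀ _ (ofReal_ne_zero.2 (norm_ne_zero_iff.2 hw))
  have hprod : ((z 0 * z 1 * z 2).re + p 0 * I : ℂ) = z 0 * z 1 * z 2 := by
    rw [← him, re_add_im]
  rw [torusParam, hr₀, hr₁, hpolar hz₀, hpolar hz₁, hprod,
    mul_div_cancel_left₀ _ (mul_ne_zero hz₀ hz₁)]
  funext i
  fin_cases i <;> rfl

theorem nonempty_fiber_homeomorph_of_solvesCubic (hS_cont : Continuous S)
    (hS : SolvesCubic p S) (hS_pos : ∀ t, 0 < S t ∧ p 1 < S t) :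
    Nonempty (HarveyLawson ⁻¹' {p} ≃ₜ sphere (0 : ℂ) 1 × sphere (0 : ℂ) 1 × ℝ) := by
  have hne (z : HarveyLawson ⁻¹' {p}) := ne_zero_of_mem_fiber hS hS_pos z.2
  have hc (i : Fin 3) : Continuous fun z : HarveyLawson ⁻¹' {p} ↦ z.1 i :=
    (continuous_apply i).comp continuous_subtype_val
  have hunit {i : Fin 3} (hi : ∀ z : HarveyLawson ⁻¹' {p}, z.1 i ≠ 0) :
      Continuous fun z : HarveyLawson ⁻¹' {p} ↦ z.1 i / ‖z.1 i‖ :=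
    (hc i).div (continuous_ofReal.comp (hc i).norm)
      fun z ↦ ofReal_ne_zero.2 (norm_ne_zero_iff.2 (hi z))
  exact ⟨{
    toFun z := (⟨z.1 0 / ‖z.1 0‖, div_norm_mem_sphere (hne z).1⟩,
      ⟨z.1 1 / ‖z.1 1‖, div_norm_mem_sphere (hne z).2⟩, (z.1 0 * z.1 1 * z.1 2).re)
    invFun x := ⟨torusParam p S x.1 x.2.1 x.2.2, torusParam_mem_fiber hS hS_pos x.1.2 x.2.1.2 _⟩
    left_inv z := Subtype.ext (torusParam_of_mem_fiber hS hS_pos z.2)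
    right_inv := fun ⟨u₀, u₁, t⟩ ↦ by
      refine Prod.ext (Subtype.ext ?_) (Prod.ext (Subtype.ext ?_) ?_)
      · exact ofReal_mul_div_norm (Real.sqrt_pos.2 (hS_pos t).1)
          (mem_sphere_zero_iff_norm.1 u₀.2)
      · exact ofReal_mul_div_norm (Real.sqrt_pos.2 (sub_pos.2 (hS_pos t).2))
          (mem_sphere_zero_iff_norm.1 u₁.2)
      · change (torusParam p S u₀ u₁ t 0 * torusParam p S u₀ u₁ t 1 *
          torusParam p S u₀ u₁ t 2).re = t
        simp [torusParam_mul hS_pos u₀.2 u₁.2]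
    continuous_toFun := .prodMk ((hunit fun z ↦ (hne z).1).subtype_mk _)
      (.prodMk ((hunit fun z ↦ (hne z).2).subtype_mk _)
        (continuous_re.comp (((hc 0).mul (hc 1)).mul (hc 2))))
    continuous_invFun := (continuous_torusParam hS_cont hS_pos).subtype_mk _ }⟩

end Torus

theorem nonempty_fiber_homeomorph_of_ne_zero_or_lt {p : Fin 3 → ℝ}
    (hp : p 0 ≠ 0 ∨ 0 < p 2 ∧ p 1 < p 2) :
    Nonempty (HarveyLawson ⁻¹' {p} ≃ₜ sphere (0 : ℂ) 1 × sphere (0 : ℂ) 1 × ℝ) := by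
  obtain ⟨R, hR_cont, hR⟩ := (cubic_strictMonoOn (p 1) (p 2)).exists_continuous_inverse_Ici
    (continuous_cubic _ _).continuousOn (tendsto_cubic_atTop _ _)
  have hS : SolvesCubic p fun t ↦ R (t ^ 2 + p 0 ^ 2) :=
    fun t ↦ hR _ (by rw [cubic_max_eq_zero]; positivity)
  refine nonempty_fiber_homeomorph_of_solvesCubic (by fun_prop) hS fun t ↦ ?_
  exact pos_of_sq_le_cubic hp (hS t).1 (by rw [(hS t).2]; nlinarith [sq_nonneg t])

lemma nonempty_fiber_homeomorph_of_comp_perm {σ : Equiv.Perm (Fin 3)}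
    {L : (Fin 3 → ℝ) → Fin 3 → ℝ} (hL : L.Injective)
    (hσ : ∀ z, HarveyLawson (z ∘ σ) = L (HarveyLawson z)) (p : Fin 3 → ℝ) :
    Nonempty (HarveyLawson ⁻¹' {p} ≃ₜ HarveyLawson ⁻¹' {L p}) := by
  refine ⟨(Homeomorph.piCongrLeft (Y := fun _ ↦ ℂ) σ).symm.sets ?_⟩
  ext z
  simp only [mem_preimage, mem_singleton_iff, Homeomorph.piCongrLeft_symm_apply]
  rw [← Function.comp_def, hσ, hL.eq_iff]

lemma harveyLawson_comp_swap (z : Fin 3 → ℂ) :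
    HarveyLawson (z ∘ Equiv.swap 1 2) = HarveyLawson z ∘ Equiv.swap 1 2 := by
  funext i
  fin_cases i <;> simp [HarveyLawson, Equiv.swap_apply_of_ne_of_ne, mul_right_comm]

def rotateValues (x : Fin 3 → ℝ) : Fin 3 → ℝ := ![x 0, x 2 - x 1, -x 1]

lemma rotateValues_injective : Function.Injective rotateValues := by
  intro x y h
  have h₀ : x 0 = y 0 := congrFun h 0
  have h₁ : x 2 - x 1 = y 2 - y 1 := congrFun h 1
  have h₂ : -x 1 = -y 1 := congrFun h 2
  funext i
  fin_cases i
  · exact h₀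
  · exact neg_injective h₂
  · change x 2 = y 2
    linarith

lemma harveyLawson_comp_finRotate (z : Fin 3 → ℂ) :
    HarveyLawson (z ∘ finRotate 3) = rotateValues (HarveyLawson z) := by
  funext i
  fin_cases i
  · change (z 1 * z 2 * z 0).im = (z 0 * z 1 * z 2).im
    rw [← mul_rotate]
  · change ‖z 1‖ ^ 2 - ‖z 2‖ ^ 2 = (‖z 0‖ ^ 2 - ‖z 2‖ ^ 2) - (‖z 0‖ ^ 2 - ‖z 1‖ ^ 2)
    ring
  · change ‖z 1‖ ^ 2 - ‖z 0‖ ^ 2 = -(‖z 0‖ ^ 2 - ‖z 1‖ ^ 2)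
    ring

lemma cases_of_notMem_discriminant {p : Fin 3 → ℝ} (hp : p ∉ HLDiscriminant) :
    (p 0 ≠ 0 ∨ 0 < p 2 ∧ p 1 < p 2) ∨ (0 < p 1 ∧ p 2 < p 1) ∨ (p 1 < 0 ∧ p 2 < 0) := by
  by_contra! h
  obtain ⟨⟨hp₀, h₂⟩, h₁, h₁₂⟩ := h
  have hvec : p = ![0, p 1, p 2] := by
    funext i; fin_cases i <;> simp [hp₀]
  apply hp
  simp only [HLDiscriminant, mem_union, mem_ofPred_eq]
  rcases lt_trichotomy (p 2) 0 with hneg | hzero | hpos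
  · have : p 1 = 0 := by
      rcases lt_trichotomy (p 1) 0 with h | h | h
      · linarith [h₁₂ h]
      · exact h
      · linarith [h₁ h]
    exact .inr ⟨p 2, hneg.le, by rwa [this] at hvec⟩
  · have : p 1 ≤ 0 := not_lt.1 fun h ↦ by linarith [h₁ h]
    exact .inl (.inr ⟨p 1, this, by rwa [hzero] at hvec⟩)
  · have : p 1 = p 2 := le_antisymm (h₁ (by linarith [h₂ hpos])) (h₂ hpos)
    exact .inl (.inl ⟨p 2, hpos.le, by rwa [this] at hvec⟩)

end HarveyLawson

open HarveyLawson

/-- Every fiber of the Harvey–Lawson map over a point not on the discriminant locus is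
homeomorphic to `S¹ × S¹ × ℝ`. -/
theorem harveyLawson_nonsingular_fiber_homeo
    (p : Fin 3 → ℝ) (hp : p ∉ HLDiscriminant) :
    Nonempty ((HarveyLawson ⁻¹' {p}) ≃ₜ
      (Metric.sphere (0 : ℂ) 1 × Metric.sphere (0 : ℂ) 1 × ℝ)) := by
  rcases cases_of_notMem_discriminant hp with h | h | h
  · exact nonempty_fiber_homeomorph_of_ne_zero_or_lt h
  · obtain ⟨e₁⟩ := nonempty_fiber_homeomorph_of_comp_perm
      (Equiv.swap 1 2).surjective.injective_comp_right harveyLawson_comp_swap p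
    obtain ⟨e₂⟩ := nonempty_fiber_homeomorph_of_ne_zero_or_lt (p := p ∘ Equiv.swap 1 2) (.inr h)
    exact ⟨e₁.trans e₂⟩
  · obtain ⟨e₁⟩ := nonempty_fiber_homeomorph_of_comp_perm rotateValues_injective
      harveyLawson_comp_finRotate p
    obtain ⟨e₂⟩ := nonempty_fiber_homeomorph_of_ne_zero_or_lt (p := rotateValues p)
      (.inr ⟨show 0 < -p 1 by linarith [h.1], show p 2 - p 1 < -p 1 by linarith [h.2]⟩)
    exact ⟨e₁.trans e₂⟩
end

section
/- Let (0, x₂, x₃) be a point of the discriminant locus of the Harvey–Lawson map, i.e. (0, x₂, x₃) ∈ {(0, t, t) : t ≥ 0} ∪ {(0, t, 0) : t ≤ 0} ∪ {(0, 0, t) : t ≤ 0}, with (x₂, x₃) ≠ (0, 0). Then each of the two subsets f⁻¹((0, x₂, x₃))⁺ = f⁻¹({(0, x₂, x₃)}) ∩ {z : Re(z₁z₂z₃) ≥ 0} and f⁻¹((0, x₂, x₃))⁻ = f⁻¹({(0, x₂, x₃)}) ∩ {z : Re(z₁z₂z₃) ≤ 0} is homeomorphic to S¹ × ℝ², where S¹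 denotes the unit circle in ℂ. -/
/-!
Negating all coordinates preserves the norms `‖zᵢ‖` and changes the sign of `z₀z₁z₂`, so it
exchanges the two halves of a fiber over `{x₁ = 0}`; permuting coordinates preserves `z₀z₁z₂` and
carries the rays `(0, t, 0)` and `(0, 0, t)`, `t < 0`, onto the ray `(0, -t, -t)`. So it suffices
to treat the upper half over `(0, k, k)` with `k > 0`. There `‖z₀‖² = ‖z₁‖² + k` forces `z₀ ≠ 0`,
and, given `‖z₂‖ = ‖z₁‖`, the product `z₀z₁z₂` is a nonnegative real exactly when
`z₂ = conj (z₁ u)` with `u = z₀ / ‖z₀‖`. Hence `z ↦ (u, z₁)` identifies the half fiber with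
`S¹ × ℂ`, the inverse being `(u, w) ↦ (√(‖w‖² + k) u, w, conj (u w))`.
-/

open Complex

open scoped ComplexOrder ComplexConjugate

/-- Multiplying by `a b` turns `‖a‖ c = conj (a b)` into `‖a‖ (a b c) = ‖a‖² ‖b‖²`. -/
theorem Complex.nonneg_mul_mul_iff_norm_mul_eq_conj {a b c : ℂ} (h : ‖c‖ = ‖b‖) :
    0 ≤ a * b * c ↔ (‖a‖ : ℂ) * c = conj (a * b) := by
  have hnorm : ‖a * b * c‖ = ‖a‖ * ‖b‖ ^ 2 := by rw [norm_mul, norm_mul, h]; ring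
  have hconj : a * b * conj (a * b) = (‖a‖ : ℂ) * (‖a‖ * ‖b‖ ^ 2 : ℝ) := by
    rw [mul_conj, normSq_eq_norm_sq, norm_mul]; push_cast; ring
  constructor
  · intro hP
    have hP' : a * b * c = (‖a‖ * ‖b‖ ^ 2 : ℝ) := by rw [← hnorm, norm_of_nonneg' hP]
    rcases eq_or_ne (a * b) 0 with hab | hab
    · rcases mul_eq_zero.1 hab with rfl | rfl
      · simp
      · simp_all
    · refine mul_left_cancel₀ hab ?_
      rw [hconj, ← hP']; ring
  · intro hc
    have : a * b * c * ‖a‖ = (‖a‖ * ‖b‖ ^ 2 : ℝ) * ‖a‖ := by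
      rw [mul_assoc, mul_comm c, hc, hconj]; ring
    rcases eq_or_ne ‖a‖ 0 with ha | ha
    · simp [norm_eq_zero.1 ha]
    · rw [mul_right_cancel₀ (ofReal_ne_zero.2 ha) this]
      exact_mod_cast by positivity

namespace HarveyLawson

theorem apply_eq_iff {z : Fin 3 → ℂ} {p q r : ℝ} :
    HarveyLawson z = ![p, q, r] ↔
      (z 0 * z 1 * z 2).im = p ∧ ‖z 0‖ ^ 2 - ‖z 1‖ ^ 2 = q ∧ ‖z 0‖ ^ 2 - ‖z 2‖ ^ 2 = r := by
  simp [HarveyLawson, funext_iff, Fin.forall_fin_succ]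

def halfFiber (x : Fin 3 → ℝ) : Set (Fin 3 → ℂ) :=
  HarveyLawson ⁻¹' {x} ∩ {z | 0 ≤ (z 0 * z 1 * z 2).re}

theorem mem_halfFiber_diag_iff {k : ℝ} {z : Fin 3 → ℂ} :
    z ∈ halfFiber ![0, k, k] ↔
      ‖z 0‖ ^ 2 = ‖z 1‖ ^ 2 + k ∧ ‖z 2‖ = ‖z 1‖ ∧ (‖z 0‖ : ℂ) * z 2 = conj (z 0 * z 1) := by
  simp only [halfFiber, Set.mem_inter_iff, Set.mem_preimage, Set.mem_singleton_iff,
    Set.mem_ofPred_eq, apply_eq_iff]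
  constructor
  · rintro ⟨⟨him, h1, h2⟩, hre⟩
    have h21 : ‖z 2‖ = ‖z 1‖ := (sq_eq_sq₀ (norm_nonneg _) (norm_nonneg _)).1 (by linarith)
    refine ⟨by linarith, h21, (Complex.nonneg_mul_mul_iff_norm_mul_eq_conj h21).1 ?_⟩
    exact Complex.nonneg_iff.2 ⟨hre, him.symm⟩
  · rintro ⟨h1, h21, hc⟩
    obtain ⟨hre, him⟩ :=
      Complex.nonneg_iff.1 ((Complex.nonneg_mul_mul_iff_norm_mul_eq_conj h21).2 hc)
    exact ⟨⟨him.symm, by linarith, by rw [h21]; linarith⟩, hre⟩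

theorem ne_zero_of_mem_halfFiber_diag {k : ℝ} (hk : 0 < k) {z : Fin 3 → ℂ}
    (hz : z ∈ halfFiber ![0, k, k]) : z 0 ≠ 0 := by
  intro h0
  have := (mem_halfFiber_diag_iff.1 hz).1
  rw [h0, norm_zero] at this
  nlinarith [sq_nonneg ‖z 1‖]

noncomputable def halfFiberDiagHomeomorph {k : ℝ} (hk : 0 < k) :
    halfFiber ![0, k, k] ≃ₜ Metric.sphere (0 : ℂ) 1 × ℂ where
  toFun z := (⟨z.1 0 / ‖z.1 0‖, by simp [ne_zero_of_mem_halfFiber_diag hk z.2]⟩, z.1 1)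
  invFun p := ⟨![Real.sqrt (‖p.2‖ ^ 2 + k) * p.1, p.2, conj (p.1 * p.2)], by
    have hu : ‖(p.1 : ℂ)‖ = 1 := by simp
    have hs : 0 ≤ ‖p.2‖ ^ 2 + k := by positivity
    refine mem_halfFiber_diag_iff.2 ⟨?_, ?_, ?_⟩
    · simp [hu, Real.sq_sqrt hs]
    · simp [hu]
    · simp [hu, abs_of_nonneg (Real.sqrt_nonneg _)]; ring⟩
  left_inv z := by
    obtain ⟨h1, -, hc⟩ := mem_halfFiber_diag_iff.1 z.2
    have h0 : (‖z.1 0‖ : ℂ) ≠ 0 := by simpa using ne_zero_of_mem_halfFiber_diag hk z.2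
    have hsqrt : Real.sqrt (‖z.1 1‖ ^ 2 + k) = ‖z.1 0‖ := by
      rw [← h1, Real.sqrt_sq (norm_nonneg _)]
    ext i
    fin_cases i
    · simp [hsqrt, mul_div_cancel₀ _ h0]
    · simp
    · show conj (z.1 0 / ‖z.1 0‖ * z.1 1) = z.1 2
      rw [div_mul_eq_mul_div, map_div₀, Complex.conj_ofReal, div_eq_iff h0, ← hc, mul_comm]
  right_inv p := by
    have hs : Real.sqrt (‖p.2‖ ^ 2 + k) ≠ 0 := (Real.sqrt_pos.2 (by positivity)).ne'
    refine Prod.ext (Subtype.ext ?_) rfl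
    simp [abs_of_nonneg (Real.sqrt_nonneg _), hs]
  continuous_toFun := by
    have hz : ∀ i, Continuous fun z : halfFiber ![0, k, k] ↦ z.1 i :=
      fun i ↦ (continuous_apply i).comp continuous_subtype_val
    refine .prodMk (.subtype_mk ?_ _) (hz 1)
    exact (hz 0).div (Complex.continuous_ofReal.comp (hz 0).norm) fun z ↦ by
      simpa using ne_zero_of_mem_halfFiber_diag hk z.2
  continuous_invFun := .subtype_mk (by fun_prop) _

noncomputable def halfFiberSwapZeroOne (t : ℝ) :
    halfFiber ![0, t, 0] ≃ₜ halfFiber ![0, -t, -t] :=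
  (Homeomorph.piCongrLeft (Y := fun _ ↦ ℂ) (Equiv.swap 0 1)).symm.subtype fun z ↦ by
    have hσ : Equiv.swap (0 : Fin 3) 1 2 = 2 := rfl
    have hP : z 1 * z 0 * z 2 = z 0 * z 1 * z 2 := by ring
    simp only [halfFiber, Set.mem_inter_iff, Set.mem_preimage, Set.mem_singleton_iff,
      Set.mem_ofPred_eq, apply_eq_iff, Homeomorph.piCongrLeft_symm_apply,
      Equiv.swap_apply_left, Equiv.swap_apply_right, hσ, hP]
    constructor <;> rintro ⟨⟨h0, h1, h2⟩, hre⟩ <;> exact ⟨⟨h0, by linarith, by linarith⟩, hre⟩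

noncomputable def halfFiberSwapZeroTwo (t : ℝ) :
    halfFiber ![0, 0, t] ≃ₜ halfFiber ![0, -t, -t] :=
  (Homeomorph.piCongrLeft (Y := fun _ ↦ ℂ) (Equiv.swap 0 2)).symm.subtype fun z ↦ by
    have hσ : Equiv.swap (0 : Fin 3) 2 1 = 1 := rfl
    have hP : z 2 * z 1 * z 0 = z 0 * z 1 * z 2 := by ring
    simp only [halfFiber, Set.mem_inter_iff, Set.mem_preimage, Set.mem_singleton_iff,
      Set.mem_ofPred_eq, apply_eq_iff, Homeomorph.piCongrLeft_symm_apply,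
      Equiv.swap_apply_left, Equiv.swap_apply_right, hσ, hP]
    constructor <;> rintro ⟨⟨h0, h1, h2⟩, hre⟩ <;> exact ⟨⟨h0, by linarith, by linarith⟩, hre⟩

noncomputable def negHalfFiberHomeomorph (x₂ x₃ : ℝ) :
    (HarveyLawson ⁻¹' {![0, x₂, x₃]} ∩ {z : Fin 3 → ℂ | (z 0 * z 1 * z 2).re ≤ 0} :
      Set (Fin 3 → ℂ)) ≃ₜ halfFiber ![0, x₂, x₃] :=
  (Homeomorph.neg _).subtype fun z ↦ by
    have hP : (-z) 0 * (-z) 1 * (-z) 2 = -(z 0 * z 1 * z 2) := by simp only [Pi.neg_apply]; ring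
    simp only [halfFiber, Set.mem_inter_iff, Set.mem_preimage, Set.mem_singleton_iff,
      Set.mem_ofPred_eq, apply_eq_iff, Homeomorph.coe_neg, hP]
    simp only [Pi.neg_apply, norm_neg, Complex.neg_re, Complex.neg_im, neg_eq_zero, neg_nonneg]

theorem exists_halfFiber_homeomorph_diag {x₂ x₃ : ℝ}
    (hx : (![0, x₂, x₃] : Fin 3 → ℝ) ∈ HLDiscriminant) (hx0 : ¬(x₂ = 0 ∧ x₃ = 0)) :
    ∃ k, 0 < k ∧ Nonempty (halfFiber ![0, x₂, x₃] ≃ₜ halfFiber ![0, k, k]) := by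
  rcases hx with (⟨t, ht, heq⟩ | ⟨t, ht, heq⟩) | ⟨t, ht, heq⟩ <;>
    obtain ⟨rfl, rfl⟩ : _ = x₂ ∧ _ = x₃ := by
      simpa [funext_iff, Fin.forall_fin_succ, eq_comm] using heq
  · exact ⟨t, ht.lt_of_ne' (by simpa using hx0), ⟨.refl _⟩⟩
  · exact ⟨-t, neg_pos.2 (ht.lt_of_ne (by simpa using hx0)), ⟨halfFiberSwapZeroOne t⟩⟩
  · exact ⟨-t, neg_pos.2 (ht.lt_of_ne (by simpa using hx0)), ⟨halfFiberSwapZeroTwo t⟩⟩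

end HarveyLawson

open HarveyLawson in
/-- Over a point `(0,x₂,x₃)` of the discriminant locus other than the origin, each
of the two halves `f⁻¹((0,x₂,x₃))^±` (cut out by the sign of `Re(z₁z₂z₃)`) of the
Harvey–Lawson fiber is homeomorphic to `S¹ × ℝ²`. -/
theorem harveyLawson_singular_fiber_halves_homeo
    (x₂ x₃ : ℝ) (hx : (![0, x₂, x₃] : Fin 3 → ℝ) ∈ HLDiscriminant)
    (hx0 : ¬(x₂ = 0 ∧ x₃ = 0)) :
    Nonempty (((HarveyLawson ⁻¹' {![0, x₂, x₃]}) ∩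
        {z : Fin 3 → ℂ | 0 ≤ (z 0 * z 1 * z 2).re} : Set (Fin 3 → ℂ)) ≃ₜ
        (Metric.sphere (0 : ℂ) 1 × ℝ × ℝ)) ∧
    Nonempty (((HarveyLawson ⁻¹' {![0, x₂, x₃]}) ∩
        {z : Fin 3 → ℂ | (z 0 * z 1 * z 2).re ≤ 0} : Set (Fin 3 → ℂ)) ≃ₜ
        (Metric.sphere (0 : ℂ) 1 × ℝ × ℝ)) := by
  obtain ⟨k, hk, ⟨e⟩⟩ := exists_halfFiber_homeomorph_diag hx hx0
  let E : halfFiber ![0, x₂, x₃] ≃ₜ Metric.sphere (0 : ℂ) 1 × ℝ × ℝ :=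
    e.trans ((halfFiberDiagHomeomorph hk).trans
      ((Homeomorph.refl _).prodCongr Complex.equivRealProdCLM.toHomeomorph))
  exact ⟨⟨E⟩, ⟨(negHalfFiberHomeomorph x₂ x₃).trans E⟩⟩
end

section
/- The subset f⁻¹((0,0,0))⁺ = f⁻¹({(0, 0, 0)}) ∩ {z : Re(z₁z₂z₃) ≥ 0} of ℂ³ equals {(t e^{iα}, t e^{iβ}, t e^{iγ}) : t ∈ ℝ, t ≥ 0, α, β, γ ∈ ℝ, α + β + γ = 0}; in particular it is a cone over a 2-torus, i.e. it is closed under multiplication by nonnegative real scalars. -/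
open Complex

/-!
On `f⁻¹(0)⁺` the three coordinates have a common modulus `t` and their product is a nonnegative
real number, hence equal to its modulus `t³`. Writing `z₀ = t e^{iα}`, `z₁ = t e^{iβ}` and
cancelling `z₀ z₁` (when `t ≠ 0`) from `z₀ z₁ z₂ = t³ = z₀ z₁ · t e^{-i(α+β)}` gives
`z₂ = t e^{-i(α+β)}`. Conversely such a triple has product `t³ e^{i(α+β+γ)} = t³ ≥ 0`.
-/

open scoped ComplexOrder

theorem ofReal_mul_exp_mul_I_prod_three (t α β γ : ℝ) :
    (t * exp (α * I)) * (t * exp (β * I)) * (t * exp (γ * I)) =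
      ((t ^ 3 : ℝ) : ℂ) * exp ((α + β + γ : ℝ) * I) := by
  push_cast
  rw [add_mul, add_mul, exp_add, exp_add]
  ring

namespace HarveyLawson

def centralFiberPlus : Set (Fin 3 → ℂ) :=
  HarveyLawson ⁻¹' {![0, 0, 0]} ∩ {z | 0 ≤ (z 0 * z 1 * z 2).re}

theorem eq_zero_iff (z : Fin 3 → ℂ) :
    HarveyLawson z = ![0, 0, 0] ↔
      (z 0 * z 1 * z 2).im = 0 ∧ ‖z 1‖ = ‖z 0‖ ∧ ‖z 2‖ = ‖z 0‖ := by
  have norm_eq_iff (a b : ℂ) : ‖a‖ ^ 2 - ‖b‖ ^ 2 = 0 ↔ ‖b‖ = ‖a‖ := by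
    rw [sub_eq_zero, sq_eq_sq₀ (norm_nonneg a) (norm_nonneg b), eq_comm]
  simp only [HarveyLawson, ← norm_eq_iff, funext_iff, Fin.forall_fin_succ]
  simp

theorem mem_centralFiberPlus_iff (z : Fin 3 → ℂ) :
    z ∈ centralFiberPlus ↔ ‖z 1‖ = ‖z 0‖ ∧ ‖z 2‖ = ‖z 0‖ ∧ 0 ≤ z 0 * z 1 * z 2 := by
  rw [centralFiberPlus, Set.mem_inter_iff, Set.mem_preimage, Set.mem_singleton_iff, eq_zero_iff,
    Set.mem_ofPred_eq, Complex.nonneg_iff]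
  tauto

theorem mem_centralFiberPlus_of_add_add_eq_zero {t : ℝ} (ht : 0 ≤ t) {α β γ : ℝ}
    (hsum : α + β + γ = 0) :
    ![(t : ℂ) * exp (α * I), (t : ℂ) * exp (β * I), (t : ℂ) * exp (γ * I)] ∈
      centralFiberPlus := by
  have norm_eq (θ : ℝ) : ‖(t : ℂ) * exp (θ * I)‖ = t := by
    rw [norm_mul, norm_exp_ofReal_mul_I, mul_one, norm_real, Real.norm_of_nonneg ht]
  rw [mem_centralFiberPlus_iff]
  simp only [Matrix.cons_val_zero, Matrix.cons_val_one, Matrix.cons_val_two, Matrix.head_cons,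
    Matrix.tail_cons, norm_eq, ofReal_mul_exp_mul_I_prod_three, hsum]
  simp only [true_and, ofReal_zero, zero_mul, exp_zero, mul_one]
  exact_mod_cast pow_nonneg ht 3

theorem exists_eq_of_mem_centralFiberPlus {z : Fin 3 → ℂ} (hz : z ∈ centralFiberPlus) :
    ∃ t : ℝ, 0 ≤ t ∧ ∃ α β γ : ℝ, α + β + γ = 0 ∧
      z = ![(t : ℂ) * exp (α * I), (t : ℂ) * exp (β * I), (t : ℂ) * exp (γ * I)] := by
  obtain ⟨h1, h2, hprod⟩ := (mem_centralFiberPlus_iff z).1 hz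
  obtain ⟨t, h0⟩ : ∃ t, ‖z 0‖ = t := ⟨_, rfl⟩
  rw [h0] at h1 h2
  set α := arg (z 0)
  set β := arg (z 1)
  set γ : ℝ := -(α + β)
  have hz0 : z 0 = t * exp (α * I) := by rw [← h0]; exact (norm_mul_exp_arg_mul_I (z 0)).symm
  have hz1 : z 1 = t * exp (β * I) := by rw [← h1]; exact (norm_mul_exp_arg_mul_I (z 1)).symm
  have hz2 : z 2 = t * exp (γ * I) := by
    rcases eq_or_ne t 0 with ht | ht
    · rw [ht, ofReal_zero, zero_mul, ← norm_eq_zero, h2, ht]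
    have hprod_eq : z 0 * z 1 * z 2 = z 0 * z 1 * (t * exp (γ * I)) := by
      calc z 0 * z 1 * z 2 = ‖z 0 * z 1 * z 2‖ := eq_coe_norm_of_nonneg hprod
        _ = ((t ^ 3 : ℝ) : ℂ) := by rw [norm_mul, norm_mul, h0, h1, h2]; ring_nf
        _ = z 0 * z 1 * (t * exp (γ * I)) := by
          rw [hz0, hz1, ofReal_mul_exp_mul_I_prod_three, show α + β + γ = 0 by ring]; simp
    have hz01 : z 0 * z 1 ≠ 0 := by
      rw [← norm_ne_zero_iff, norm_mul, h0, h1]; exact mul_ne_zero ht ht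
    exact mul_left_cancel₀ hz01 hprod_eq
  refine ⟨t, h0 ▸ norm_nonneg _, α, β, γ, by ring, ?_⟩
  ext j
  fin_cases j
  · exact hz0
  · exact hz1
  · exact hz2

theorem ofReal_mul_mem_centralFiberPlus {z : Fin 3 → ℂ} (hz : z ∈ centralFiberPlus) {s : ℝ}
    (hs : 0 ≤ s) : (fun j => (s : ℂ) * z j) ∈ centralFiberPlus := by
  obtain ⟨h1, h2, hprod⟩ := (mem_centralFiberPlus_iff z).1 hz
  have hs3 : (0 : ℂ) ≤ ((s ^ 3 : ℝ) : ℂ) := by exact_mod_cast pow_nonneg hs 3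
  refine (mem_centralFiberPlus_iff _).2 ⟨?_, ?_, ?_⟩
  · simp only [norm_mul, h1]
  · simp only [norm_mul, h2]
  · calc (0 : ℂ) ≤ ((s ^ 3 : ℝ) : ℂ) * (z 0 * z 1 * z 2) := mul_nonneg hs3 hprod
      _ = s * z 0 * (s * z 1) * (s * z 2) := by push_cast; ring

end HarveyLawson

/-- The half `f⁻¹((0,0,0))⁺` of the Harvey–Lawson fiber over the origin is the set
`{(t e^{iα}, t e^{iβ}, t e^{iγ}) : t ≥ 0, α + β + γ = 0}`; in particular it is a cone,
i.e. closed under multiplication by nonnegative real scalars. -/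
theorem harveyLawson_central_fiber_plus_cone :
    (HarveyLawson ⁻¹' {![0, 0, 0]}) ∩ {z : Fin 3 → ℂ | 0 ≤ (z 0 * z 1 * z 2).re} =
      {z : Fin 3 → ℂ | ∃ t : ℝ, 0 ≤ t ∧ ∃ α β γ : ℝ, α + β + γ = 0 ∧
        z = ![(t : ℂ) * Complex.exp (α * Complex.I),
              (t : ℂ) * Complex.exp (β * Complex.I),
              (t : ℂ) * Complex.exp (γ * Complex.I)]} ∧
    ∀ z ∈ (HarveyLawson ⁻¹' {![0, 0, 0]}) ∩
        {z : Fin 3 → ℂ | 0 ≤ (z 0 * z 1 * z 2).re},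
      ∀ s : ℝ, 0 ≤ s →
        (fun j => (s : ℂ) * z j) ∈ (HarveyLawson ⁻¹' {![0, 0, 0]}) ∩
          {z : Fin 3 → ℂ | 0 ≤ (z 0 * z 1 * z 2).re} := by
  refine ⟨?_, fun z hz s hs => HarveyLawson.ofReal_mul_mem_centralFiberPlus hz hs⟩
  ext z
  constructor
  · exact HarveyLawson.exists_eq_of_mem_centralFiberPlus
  · rintro ⟨t, ht, α, β, γ, hsum, rfl⟩
    exact HarveyLawson.mem_centralFiberPlus_of_add_add_eq_zero ht hsum
end

section
/- The two cones f⁻¹((0,0,0))⁺ = f⁻¹({(0, 0, 0)}) ∩ {z : Re(z₁z₂z₃) ≥ 0} and f⁻¹((0,0,0))⁻ = f⁻¹({(0, 0, 0)}) ∩ {z : Re(z₁z₂z₃) ≤ 0} meet precisely at the origin: their intersection equals {(0, 0, 0)} ⊂ ℂ³. -/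
open Complex

/-!
On the common part of the two cones `Re(z₁z₂z₃)` vanishes along with `Im(z₁z₂z₃)`, so one of the
factors is zero; but `f = 0` forces `|z₁| = |z₂| = |z₃|`, so then all of them are.
-/

theorem eq_zero_of_norm_eq_of_prod_eq_zero {ι R : Type*} [Fintype ι] [NormedCommRing R]
    [NoZeroDivisors R] [Nontrivial R] {z : ι → R} {c : ℝ} (hnorm : ∀ i, ‖z i‖ = c)
    (hprod : ∏ i, z i = 0) : z = 0 := by
  obtain ⟨i, -, hi⟩ := Finset.prod_eq_zero_iff.mp hprod
  have hc : c = 0 := by rw [← hnorm i, hi, norm_zero]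
  funext j
  exact norm_eq_zero.mp (hc ▸ hnorm j)

theorem harveyLawson_eq_zero_iff (z : Fin 3 → ℂ) :
    HarveyLawson z = ![0, 0, 0] ↔
      (z 0 * z 1 * z 2).im = 0 ∧ ‖z 0‖ = ‖z 1‖ ∧ ‖z 0‖ = ‖z 2‖ := by
  have sq_norm_inj (a b : ℂ) : ‖a‖ ^ 2 - ‖b‖ ^ 2 = 0 ↔ ‖a‖ = ‖b‖ := by
    rw [sub_eq_zero, pow_left_inj₀ (norm_nonneg a) (norm_nonneg b) two_ne_zero]
  simp only [HarveyLawson, ← sq_norm_inj, funext_iff, Fin.forall_fin_succ]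
  simp

/-- The two cones `f⁻¹((0,0,0))⁺` and `f⁻¹((0,0,0))⁻` meet precisely at the origin. -/
theorem harveyLawson_cones_meet_at_origin :
    ((HarveyLawson ⁻¹' {![0, 0, 0]}) ∩ {z : Fin 3 → ℂ | 0 ≤ (z 0 * z 1 * z 2).re}) ∩
    ((HarveyLawson ⁻¹' {![0, 0, 0]}) ∩ {z : Fin 3 → ℂ | (z 0 * z 1 * z 2).re ≤ 0}) =
      {(0 : Fin 3 → ℂ)} := by
  ext z
  simp only [Set.mem_inter_iff, Set.mem_preimage, Set.mem_singleton_iff, Set.mem_ofPred_eq,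
    harveyLawson_eq_zero_iff]
  constructor
  · rintro ⟨⟨⟨him, h01, h02⟩, hre_nonneg⟩, -, hre_nonpos⟩
    have hprod : ∏ i, z i = 0 := by
      rw [Fin.prod_univ_three]
      exact Complex.ext (le_antisymm hre_nonpos hre_nonneg) him
    refine eq_zero_of_norm_eq_of_prod_eq_zero (c := ‖z 0‖) (fun i ↦ ?_) hprod
    fin_cases i <;> simp [← h01, ← h02]
  · rintro rfl
    simp
end

section
/- For every p ∈ ℝ³ with p ≠ (0, 0, 0), there exist integers k₁, k₂, k₃, not all zero, with k₁ + k₂ + k₃ = 0, such that the circle action (t, z) ↦ (e^{ik₁t}z₁, e^{ik₂t}z₂, e^{ik₃t}z₃) maps the fiber f⁻¹({p}) of the Harvey–Lawson map into itself and acts freely on it: for every z ∈ f⁻¹({p}) and t ∈ ℝ, if (e^{ik₁t}z₁, e^{ik₂t}z₂, e^{ik₃t}z₃) = (z₁, z₂, z₃) then t ∈ 2πℤ. (This realizes, for the Harvey–Lawson fibration, the statement that every fiber away from the vertex admits a fixed-point-free U(1) action.) -/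
open Complex

/-! The weights `k = e₀ - eⱼ` with `j ∈ {1, 2}` sum to zero, so the action preserves every
`|zᵢ|` and the product `z₀z₁z₂`, hence every fiber. If `p ≠ 0`, then `p₀` or `p₁` is nonzero,
which rules out `z₀ = z₁ = 0` on the fiber (take `j = 1`), or else `p₂ ≠ 0`, which rules out
`z₀ = z₂ = 0` (take `j = 2`). The nonzero coordinate has weight `±1`, so `t` fixes the point
only if `e^{it} = 1`. -/

section CircleAction

variable {ι : Type*}

noncomputable def circleAct (k : ι → ℤ) (t : ℝ) (z : ι → ℂ) : ι → ℂ :=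
  fun j => exp (k j * t * I) * z j

theorem norm_circleAct (k : ι → ℤ) (t : ℝ) (z : ι → ℂ) (j : ι) :
    ‖circleAct k t z j‖ = ‖z j‖ := by
  have : (k j : ℂ) * t * I = ((k j * t : ℝ) : ℂ) * I := by push_cast; ring
  rw [circleAct, norm_mul, this, norm_exp_ofReal_mul_I, one_mul]

theorem prod_circleAct [Fintype ι] {k : ι → ℤ} (hk : ∑ j, k j = 0) (t : ℝ) (z : ι → ℂ) :
    ∏ j, circleAct k t z j = ∏ j, z j := by
  have hsum : ∑ j, (k j : ℂ) * t * I = 0 := by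
    rw [← Finset.sum_mul, ← Finset.sum_mul, ← Int.cast_sum, hk, Int.cast_zero, zero_mul, zero_mul]
  simp only [circleAct]
  rw [Finset.prod_mul_distrib, ← exp_sum, hsum, exp_zero, one_mul]

theorem exists_eq_two_pi_mul_of_exp_eq_one {k : ℤ} (hk : IsUnit k) {t : ℝ}
    (h : exp (k * t * I) = 1) : ∃ m : ℤ, t = 2 * Real.pi * m := by
  obtain ⟨n, hn⟩ := exp_eq_one_iff.mp h
  refine ⟨k * n, ?_⟩
  have hkk : (k : ℂ) * k = 1 := by
    rcases Int.isUnit_iff.mp hk with rfl | rfl <;> norm_num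
  have : ((t : ℝ) : ℂ) = ((2 * Real.pi * (k * n : ℤ) : ℝ) : ℂ) := by
    push_cast
    linear_combination (-(k : ℂ) * I) * hn - t * hkk + (k ^ 2 * t - 2 * Real.pi * k * n) * I_sq
  exact_mod_cast this

theorem exists_eq_two_pi_mul_of_circleAct_eq_self {k : ι → ℤ} {t : ℝ} {z : ι → ℂ} {j : ι}
    (hk : IsUnit (k j)) (hz : z j ≠ 0) (h : circleAct k t z = z) :
    ∃ m : ℤ, t = 2 * Real.pi * m :=
  exists_eq_two_pi_mul_of_exp_eq_one hk <|
    mul_right_cancel₀ hz <| (congrFun h j).trans (one_mul _).symm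

end CircleAction

theorem harveyLawson_circleAct {k : Fin 3 → ℤ} (hk : k 0 + k 1 + k 2 = 0) (t : ℝ)
    (z : Fin 3 → ℂ) : HarveyLawson (circleAct k t z) = HarveyLawson z := by
  have hprod := prod_circleAct (by rwa [Fin.sum_univ_three]) t z
  simp only [Fin.prod_univ_three] at hprod
  simp only [HarveyLawson, hprod, norm_circleAct]

theorem harveyLawson_eq_zero_of_eq_zero {z : Fin 3 → ℂ} {j : Fin 3} (hj : j ≠ 0)
    (h0 : z 0 = 0) (hzj : z j = 0) : HarveyLawson z 0 = 0 ∧ HarveyLawson z j = 0 := by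
  fin_cases j <;> simp_all [HarveyLawson]

theorem harveyLawson_fiber_exists_coord_ne_zero {p : Fin 3 → ℝ} (hp : p ≠ 0) :
    ∃ j ≠ 0, ∀ z, HarveyLawson z = p → z 0 ≠ 0 ∨ z j ≠ 0 := by
  have key : ∀ j ≠ 0, p 0 ≠ 0 ∨ p j ≠ 0 → ∀ z, HarveyLawson z = p → z 0 ≠ 0 ∨ z j ≠ 0 := by
    rintro j hj hpj z rfl
    contrapose! hpj
    exact harveyLawson_eq_zero_of_eq_zero hj hpj.1 hpj.2
  by_cases h : p 0 = 0 ∧ p 1 = 0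
  · refine ⟨2, by decide, key 2 (by decide) (Or.inr fun h2 => hp ?_)⟩
    ext i; fin_cases i <;> simp [h.1, h.2, h2]
  · exact ⟨1, by decide, key 1 (by decide) (not_and_or.mp h)⟩

/-- Every fiber of the Harvey–Lawson map away from the origin of the base admits a
fixed-point-free circle action `(t,z) ↦ (e^{ik₁t}z₁, e^{ik₂t}z₂, e^{ik₃t}z₃)` with
`k₁ + k₂ + k₃ = 0` and the `kⱼ` not all zero. -/
theorem harveyLawson_fiber_free_circle_action
    (p : Fin 3 → ℝ) (hp : p ≠ ![0, 0, 0]) :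
    ∃ k : Fin 3 → ℤ, k ≠ 0 ∧ k 0 + k 1 + k 2 = 0 ∧
      (∀ z ∈ HarveyLawson ⁻¹' {p}, ∀ t : ℝ,
        (fun j => Complex.exp ((k j : ℂ) * (t : ℂ) * Complex.I) * z j) ∈
          HarveyLawson ⁻¹' {p}) ∧
      (∀ z ∈ HarveyLawson ⁻¹' {p}, ∀ t : ℝ,
        (fun j => Complex.exp ((k j : ℂ) * (t : ℂ) * Complex.I) * z j) = z →
          ∃ m : ℤ, t = 2 * Real.pi * m) := by
  obtain ⟨j, hj, hfiber⟩ := harveyLawson_fiber_exists_coord_ne_zero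
    (by simpa only [← Matrix.zero_empty, Matrix.cons_zero_zero] using hp)
  set k : Fin 3 → ℤ := Pi.single 0 1 - Pi.single j 1
  have hk0 : k 0 = 1 := by simp [k, hj.symm]
  have hkj : k j = -1 := by simp [k, hj]
  have hsum : k 0 + k 1 + k 2 = 0 := by
    rw [← Fin.sum_univ_three]; simp [k]
  refine ⟨k, fun h => by simp [h] at hk0, hsum, fun z hz t => ?_, fun z hz t hfix => ?_⟩
  · exact (harveyLawson_circleAct hsum t z).trans hz
  · rcases hfiber z hz with h0 | h
    · exact exists_eq_two_pi_mul_of_circleAct_eq_self (by simp [hk0]) h0 hfix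
    · exact exists_eq_two_pi_mul_of_circleAct_eq_self (by simp [hkj]) h hfix
end

section
/- Let M₁ = [[1, 0, 1], [0, 1, 0], [0, 0, 1]], M₂ = [[1, 1, 0], [0, 1, 0], [0, 0, 1]], M₃ = [[1, −1, −1], [0, 1, 0], [0, 0, 1]] be the three monodromy matrices on H₁ at a negative vertex of a generic T³ fibration. Then each Mᵢ ∈ SL(3, ℤ), the product M₁·M₂·M₃ is the identity matrix, the common fixed subspace {v ∈ ℝ³ : M₁v = v, M₂v = v, M₃v = v} equals the 1-dimensional line span{e₁}, and the common fixed subspace of the three inverse transposes ᵗM₁⁻¹, ᵗM₂⁻¹, ᵗM₃⁻¹ equals the 2-dimensional plane {v ∈ ℝ³ : v₁ = 0} = span{e₂, e₃}; that is, at a negative vertex the fixed planes of the H₁ monodromies intersect in a 1-dimensional line while the H¹ ≅ H₂ monodromies have a common 2-dimensional fixed plane. -/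
open Matrix

lemma inv1 : (!![1, 0, 1; 0, 1, 0; 0, 0, 1] : Matrix (Fin 3) (Fin 3) ℝ)⁻¹ =
    !![1, 0, -1; 0, 1, 0; 0, 0, 1] := by
  apply Matrix.inv_eq_right_inv
  ext i j
  fin_cases i <;> fin_cases j <;>
    simp [Matrix.mul_apply, Fin.sum_univ_three, Matrix.vecHead, Matrix.vecTail]

lemma inv2 : (!![1, 1, 0; 0, 1, 0; 0, 0, 1] : Matrix (Fin 3) (Fin 3) ℝ)⁻¹ =
    !![1, -1, 0; 0, 1, 0; 0, 0, 1] := by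
  apply Matrix.inv_eq_right_inv
  ext i j
  fin_cases i <;> fin_cases j <;>
    simp [Matrix.mul_apply, Fin.sum_univ_three, Matrix.vecHead, Matrix.vecTail]

lemma inv3 : (!![1, -1, -1; 0, 1, 0; 0, 0, 1] : Matrix (Fin 3) (Fin 3) ℝ)⁻¹ =
    !![1, 1, 1; 0, 1, 0; 0, 0, 1] := by
  apply Matrix.inv_eq_right_inv
  ext i j
  fin_cases i <;> fin_cases j <;>
    simp [Matrix.mul_apply, Fin.sum_univ_three, Matrix.vecHead, Matrix.vecTail]

/-- The three monodromy matrices on `H₁` at a negative vertex of a generic `T³`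
fibration lie in `SL(3,ℤ)`, their product is the identity, their common fixed subspace
in `ℝ³` is the line `span{e₁} = {v : v₂ = v₃ = 0}`, and the common fixed subspace of
their inverse transposes is the 2-plane `{v : v₁ = 0} = span{e₂,e₃}`. -/
theorem negative_vertex_monodromy :
    (!![1, 0, 1; 0, 1, 0; 0, 0, 1] : Matrix (Fin 3) (Fin 3) ℤ).det = 1 ∧
    (!![1, 1, 0; 0, 1, 0; 0, 0, 1] : Matrix (Fin 3) (Fin 3) ℤ).det = 1 ∧
    (!![1, -1, -1; 0, 1, 0; 0, 0, 1] : Matrix (Fin 3) (Fin 3) ℤ).det = 1 ∧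
    (!![1, 0, 1; 0, 1, 0; 0, 0, 1] : Matrix (Fin 3) (Fin 3) ℤ) *
        !![1, 1, 0; 0, 1, 0; 0, 0, 1] * !![1, -1, -1; 0, 1, 0; 0, 0, 1] = 1 ∧
    {v : Fin 3 → ℝ |
        (!![1, 0, 1; 0, 1, 0; 0, 0, 1] : Matrix (Fin 3) (Fin 3) ℝ).mulVec v = v ∧
        (!![1, 1, 0; 0, 1, 0; 0, 0, 1] : Matrix (Fin 3) (Fin 3) ℝ).mulVec v = v ∧
        (!![1, -1, -1; 0, 1, 0; 0, 0, 1] : Matrix (Fin 3) (Fin 3) ℝ).mulVec v = v} =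
      {v : Fin 3 → ℝ | v 1 = 0 ∧ v 2 = 0} ∧
    {v : Fin 3 → ℝ |
        (((!![1, 0, 1; 0, 1, 0; 0, 0, 1] : Matrix (Fin 3) (Fin 3) ℝ)⁻¹)ᵀ).mulVec v = v ∧
        (((!![1, 1, 0; 0, 1, 0; 0, 0, 1] : Matrix (Fin 3) (Fin 3) ℝ)⁻¹)ᵀ).mulVec v = v ∧
        (((!![1, -1, -1; 0, 1, 0; 0, 0, 1] :
            Matrix (Fin 3) (Fin 3) ℝ)⁻¹)ᵀ).mulVec v = v} =
      {v : Fin 3 → ℝ | v 0 = 0} := by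
  refine ⟨by simp [Matrix.det_fin_three, Matrix.vecHead, Matrix.vecTail],
    by simp [Matrix.det_fin_three, Matrix.vecHead, Matrix.vecTail],
    by simp [Matrix.det_fin_three, Matrix.vecHead, Matrix.vecTail], ?_, ?_, ?_⟩
  · ext i j
    fin_cases i <;> fin_cases j <;>
      simp [Matrix.mul_apply, Fin.sum_univ_three, Matrix.one_apply,
        Matrix.vecHead, Matrix.vecTail]
  · ext v
    simp only [Set.mem_setOf_eq]
    constructor
    · rintro ⟨h1, h2, h3⟩
      have a1 := congrFun h1 0
      have a2 := congrFun h2 0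
      have a3 := congrFun h3 0
      simp [Matrix.mulVec, dotProduct, Fin.sum_univ_three] at a1 a2 a3
      exact ⟨by linarith, by linarith⟩
    · rintro ⟨h1, h2⟩
      refine ⟨?_, ?_, ?_⟩ <;>
        · funext i
          fin_cases i <;>
            simp [Matrix.mulVec, dotProduct, Fin.sum_univ_three, h1, h2,
              Matrix.vecHead, Matrix.vecTail]
  · ext v
    simp only [Set.mem_setOf_eq, inv1, inv2, inv3]
    constructor
    · rintro ⟨h1, h2, h3⟩
      have a2 := congrFun h2 1
      simp [Matrix.mulVec, dotProduct, Fin.sum_univ_three,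
        Matrix.vecHead, Matrix.vecTail] at a2
      linarith
    · intro h
      refine ⟨?_, ?_, ?_⟩ <;>
        · funext i
          fin_cases i <;>
            simp [Matrix.mulVec, dotProduct, Fin.sum_univ_three, h,
              Matrix.vecHead, Matrix.vecTail]
end
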